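/- Let T be a triangulated category and let X →u Y →v Z →w X[1] be a distinguished triangle in T such that X and Y are indecomposable, u is irreducible, and every endomorphism of Y is either an isomorphism or nilpotent. Then every idempotent endomorphism of Z is 0 or the identity; in particular, the mapping cone Z of u is indecomposable. -/

import Mathlib

/-!
Let `e` be an idempotent of the cone. Irreducibility of `u` and the dichotomy on `End Y` first
force `v ≫ e ≫ w = 0`, so `e` lifts along `v` to some `φ : Y ⟶ Y`. Since `φ ≫ (𝟙 - φ)` kills
`v ≠ 0`, the maps `φ` and `𝟙 - φ` are not both invertible, so one of them is nilpotent; the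
idempotent `ε` it lifts (`e` or `𝟙 - e`) then satisfies `v ≫ ε = 0`, and such an idempotent
vanishes because it factors through `w`.
-/

open CategoryTheory CategoryTheory.Limits CategoryTheory.Pretriangulated

namespace ARShapes

/-- An object of a preadditive category is indecomposable if it is nonzero and, whenever it is
exhibited as a biproduct of two objects (via inclusions and projections satisfying the biproduct
identities), one of the two summands is zero. -/
def Indecomposable {K : Type*} [Category K] [Preadditive K] (Z : K) : Prop :=
  ¬ IsZero Z ∧ ∀ (A B : K) (i : A ⟶ Z) (j : B ⟶ Z) (p : Z ⟶ A) (q : Z ⟶ B),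
    i ≫ p = 𝟙 A → j ≫ q = 𝟙 B → i ≫ q = 0 → j ≫ p = 0 → p ≫ i + q ≫ j = 𝟙 Z →
    IsZero A ∨ IsZero B

/-- A morphism in a category is irreducible if it is neither a split monomorphism nor a
split epimorphism, and in any factorization `f = g ≫ h`, either `g` is a split monomorphism
or `h` is a split epimorphism. -/
def IrreducibleHom {K : Type*} [Category K] {X Y : K} (f : X ⟶ Y) : Prop :=
  ¬ IsSplitMono f ∧ ¬ IsSplitEpi f ∧
    ∀ (Z : K) (g : X ⟶ Z) (h : Z ⟶ Y), f = g ≫ h → IsSplitMono g ∨ IsSplitEpi h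

section Preadditive

variable {C : Type*} [Category C] [Preadditive C]

theorem eq_zero_of_isNilpotent_of_comp_eq_self {Y W : C} {η : End Y}
    (hη : IsNilpotent η) {f : Y ⟶ W} (h : η ≫ f = f) : f = 0 := by
  obtain ⟨n, hn⟩ := hη
  have hpow : ∀ k : ℕ, (η ^ k) ≫ f = f := by
    intro k
    induction k with
    | zero => exact Category.id_comp f
    | succ k ih => rw [pow_succ, End.mul_def, Category.assoc, ih, h]
  rw [← hpow n, hn]
  exact zero_comp

theorem id_sub_comp_id_sub_of_idem {Z : C} {e : Z ⟶ Z} (he : e ≫ e = e) :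
    (𝟙 Z - e) ≫ (𝟙 Z - e) = 𝟙 Z - e :=
  IsIdempotentElem.one_sub (show IsIdempotentElem (show End Z from e) from he)

theorem id_sub_comp_eq_comp_id_sub {Y Z : C} {φ : Y ⟶ Y} {v : Y ⟶ Z} {e : Z ⟶ Z}
    (h : φ ≫ v = v ≫ e) : (𝟙 Y - φ) ≫ v = v ≫ (𝟙 Z - e) := by
  rw [Preadditive.sub_comp, Preadditive.comp_sub, h, Category.id_comp, Category.comp_id]

/-- With `ρ = τ ≫ w` one has `ρ ≫ ρ ≫ (𝟙 - ρ) = 0`, so injectivity of `𝟙 - ρ` kills `ρ ≫ ρ`,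
and `w ≫ τ = (w ≫ τ) ≫ (w ≫ τ) ≫ (w ≫ τ) = w ≫ (ρ ≫ ρ) ≫ τ`. -/
theorem comp_eq_zero_of_idem_of_mono_id_sub {A B : C} (w : A ⟶ B) (τ : B ⟶ A)
    (hε : (w ≫ τ) ≫ (w ≫ τ) = w ≫ τ) [Mono (𝟙 B - τ ≫ w)] : w ≫ τ = 0 := by
  have hρ : (τ ≫ w) ≫ (τ ≫ w) = 0 := by
    rw [← cancel_mono (𝟙 B - τ ≫ w), zero_comp, Preadditive.comp_sub, Category.comp_id]
    simp only [Category.assoc] at hε ⊢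
    rw [reassoc_of% hε, sub_self]
  calc w ≫ τ = ((w ≫ τ) ≫ (w ≫ τ)) ≫ (w ≫ τ) := by rw [hε, hε]
    _ = w ≫ ((τ ≫ w) ≫ (τ ≫ w)) ≫ τ := by simp only [Category.assoc]
    _ = 0 := by rw [hρ, zero_comp, comp_zero]

theorem indecomposable_of_idempotents {Z : C} (hZ : ¬ IsZero Z)
    (hidem : ∀ e : Z ⟶ Z, e ≫ e = e → e = 0 ∨ e = 𝟙 Z) : Indecomposable Z := by
  refine ⟨hZ, fun A B i j p q hip hjq hiq hjp hsum => ?_⟩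
  have hpi : (p ≫ i) ≫ (p ≫ i) = p ≫ i := by
    rw [Category.assoc, reassoc_of% hip]
  rcases hidem (p ≫ i) hpi with h0 | h1
  · left
    rw [IsZero.iff_id_eq_zero, ← hip, ← Category.id_comp (i ≫ p), ← hip]
    simp only [Category.assoc]
    rw [reassoc_of% h0, zero_comp, comp_zero]
  · right
    have hqj : q ≫ j = 0 := by rwa [h1, add_eq_left] at hsum
    rw [IsZero.iff_id_eq_zero, ← hjq, ← Category.id_comp (j ≫ q), ← hjq]
    simp only [Category.assoc]
    rw [reassoc_of% hqj, zero_comp, comp_zero]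

end Preadditive

section Triangle

variable {T : Type*} [Category T] [Preadditive T] [HasZeroObject T]
    [HasShift T ℤ] [∀ n : ℤ, (shiftFunctor T n).Additive] [Pretriangulated T]
    {X Y Z : T} {u : X ⟶ Y} {v : Y ⟶ Z} {w : Z ⟶ X⟦(1 : ℤ)⟧}

theorem mor₂_ne_zero_of_not_isSplitEpi (hdist : Triangle.mk u v w ∈ distTriang T)
    (hu : ¬ IsSplitEpi u) : v ≠ 0 := fun hv =>
  have : Epi u := Triangle.epi₁ _ hdist hv
  hu (isSplitEpi_of_epi u)

/-- Writing `ε = w ≫ τ`, the endomorphism `𝟙 - ε` of `Z` extends to an endomorphism of the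
triangle with components `𝟙 - θ` on `X` (where `θ⟦1⟧' = τ ≫ w`) and `φ` on `Y`, with `φ ≫ v = v`.
So `φ` is not nilpotent, hence invertible, `u = (𝟙 - θ) ≫ (u ≫ inv φ)`, and irreducibility of `u`
makes `𝟙 - τ ≫ w` split mono. -/
theorem idem_eq_zero_of_comp_eq_zero (hdist : Triangle.mk u v w ∈ distTriang T)
    (hu : IrreducibleHom u) (hend : ∀ e : End Y, IsIso (e : Y ⟶ Y) ∨ IsNilpotent e)
    {ε : Z ⟶ Z} (hε : ε ≫ ε = ε) (hvε : v ≫ ε = 0) :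
    ε = 0 := by
  obtain ⟨τ, rfl⟩ : ∃ τ : X⟦(1 : ℤ)⟧ ⟶ Z, ε = w ≫ τ := Triangle.yoneda_exact₃ _ hdist ε hvε
  let θ : X ⟶ X := (shiftFunctor T (1 : ℤ)).preimage (τ ≫ w)
  have hθ : (𝟙 X - θ)⟦(1 : ℤ)⟧' = 𝟙 _ - τ ≫ w := by
    rw [Functor.map_sub, CategoryTheory.Functor.map_id, Functor.map_preimage]
  obtain ⟨φ, huφ, hφv⟩ : ∃ φ : Y ⟶ Y, u ≫ φ = (𝟙 X - θ) ≫ u ∧ v ≫ (𝟙 Z - w ≫ τ) = φ ≫ v :=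
    complete_distinguished_triangle_morphism₂ _ _ hdist hdist
    (𝟙 X - θ) (𝟙 Z - w ≫ τ) (by
      dsimp only [Triangle.mk]
      rw [hθ, Preadditive.comp_sub, Preadditive.sub_comp, Category.comp_id, Category.id_comp,
        Category.assoc])
  rw [Preadditive.comp_sub, hvε, sub_zero, Category.comp_id] at hφv
  rcases hend φ with hφ | hφ
  · have hfac : u = (𝟙 X - θ) ≫ (u ≫ inv φ) := by
      rw [← Category.assoc, ← huφ, Category.assoc, IsIso.hom_inv_id, Category.comp_id]
    rcases hu.2.2 _ _ _ hfac with hmono | hepi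
    · have : Mono (𝟙 _ - τ ≫ w) := hθ ▸ inferInstance
      exact comp_eq_zero_of_idem_of_mono_id_sub w τ hε
    · have : IsSplitEpi ((u ≫ inv φ) ≫ φ) := inferInstance
      exact absurd (by simpa using this) hu.2.1
  · exact absurd (eq_zero_of_isNilpotent_of_comp_eq_self hφ hφv.symm)
      (mor₂_ne_zero_of_not_isSplitEpi hdist hu.2.1)

theorem idem_eq_zero_of_isNilpotent_lift (hdist : Triangle.mk u v w ∈ distTriang T)
    (hu : IrreducibleHom u) (hend : ∀ e : End Y, IsIso (e : Y ⟶ Y) ∨ IsNilpotent e)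
    {e : Z ⟶ Z} (he : e ≫ e = e) {φ : End Y}
    (hφ : IsNilpotent φ) (hlift : φ ≫ v = v ≫ e) : e = 0 :=
  idem_eq_zero_of_comp_eq_zero hdist hu hend he <|
    eq_zero_of_isNilpotent_of_comp_eq_self hφ (by rw [reassoc_of% hlift, he])

/-- `(φ ≫ (𝟙 - φ)) ≫ v = v ≫ e ≫ (𝟙 - e) = 0`, so if `φ ≫ (𝟙 - φ)` were invertible, `v` would
vanish. -/
theorem not_isIso_id_sub_of_isIso_lift (hdist : Triangle.mk u v w ∈ distTriang T)
    (hu : ¬ IsSplitEpi u) {e : Z ⟶ Z} (he : e ≫ e = e) {φ : Y ⟶ Y} [IsIso φ]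
    (hlift : φ ≫ v = v ≫ e) : ¬ IsIso (𝟙 Y - φ) := fun _ => by
  have h0 : (φ ≫ (𝟙 Y - φ)) ≫ v = 0 := by
    rw [Category.assoc, id_sub_comp_eq_comp_id_sub hlift, reassoc_of% hlift,
      Preadditive.comp_sub, Category.comp_id, he, sub_self, comp_zero]
  exact mor₂_ne_zero_of_not_isSplitEpi hdist hu
    ((cancel_epi (φ ≫ (𝟙 Y - φ))).mp (by rw [h0, comp_zero]))

theorem idem_eq_zero_or_eq_id_of_lift (hdist : Triangle.mk u v w ∈ distTriang T)
    (hu : IrreducibleHom u) (hend : ∀ e : End Y, IsIso (e : Y ⟶ Y) ∨ IsNilpotent e)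
    {e : Z ⟶ Z} (he : e ≫ e = e) {φ : Y ⟶ Y}
    (hlift : φ ≫ v = v ≫ e) : e = 0 ∨ e = 𝟙 Z := by
  rcases hend φ with hφ | hφ
  · right
    rcases hend (𝟙 Y - φ) with hφ' | hφ'
    · exact absurd hφ' (not_isIso_id_sub_of_isIso_lift hdist hu.2.1 he hlift)
    · exact (sub_eq_zero.mp (idem_eq_zero_of_isNilpotent_lift hdist hu hend
        (id_sub_comp_id_sub_of_idem he) hφ' (id_sub_comp_eq_comp_id_sub hlift))).symm
  · exact Or.inl (idem_eq_zero_of_isNilpotent_lift hdist hu hend he hφ hlift)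

/-- Complete `γ = (v ≫ e) ≫ w` to a triangle `X →f C →g Y →γ X⟦1⟧`; the morphism of triangles
extending `(𝟙 X, v ≫ e)` factors `u = f ≫ m`. If `f` is split mono then `γ = 0`; if `m` is split
epi then `v = η ≫ v ≫ e` with `η = section_ m ≫ g`, and both alternatives for `η` force `γ = 0`. -/
theorem comp_idem_comp_eq_zero (hdist : Triangle.mk u v w ∈ distTriang T)
    (hu : IrreducibleHom u) (hend : ∀ e : End Y, IsIso (e : Y ⟶ Y) ∨ IsNilpotent e)
    {e : Z ⟶ Z} (he : e ≫ e = e) : (v ≫ e) ≫ w = 0 := by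
  obtain ⟨C, f, g, hfg⟩ := distinguished_cocone_triangle₂ ((v ≫ e) ≫ w)
  obtain ⟨m, hfm, hgm⟩ : ∃ m : C ⟶ Y, f ≫ m = 𝟙 X ≫ u ∧ g ≫ (v ≫ e) = m ≫ v :=
    complete_distinguished_triangle_morphism₂ _ _ hfg hdist (𝟙 X) (v ≫ e) (by
      dsimp only [Triangle.mk]
      rw [CategoryTheory.Functor.map_id, Category.comp_id])
  rcases hu.2.2 _ f m (by rw [hfm, Category.id_comp]) with hf | hm
  · exact Triangle.mor₃_eq_zero_of_mono₁ _ hfg (inferInstance : Mono f)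
  · have hv : v = (section_ m ≫ g) ≫ v ≫ e := by
      rw [Category.assoc, hgm, IsSplitEpi.id_assoc]
    rcases hend (section_ m ≫ g) with hη | hη
    · have hvw : v ≫ w = 0 := comp_distTriang_mor_zero₂₃ _ hdist
      rw [← (IsIso.inv_comp_eq _).mpr hv, Category.assoc, hvw, comp_zero]
    · have hve : v ≫ e = 0 := eq_zero_of_isNilpotent_of_comp_eq_self hη (by
        conv_rhs => rw [hv]
        simp only [Category.assoc, he])
      rw [hve, zero_comp]

theorem idem_eq_zero_or_eq_id (hdist : Triangle.mk u v w ∈ distTriang T)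
    (hu : IrreducibleHom u) (hend : ∀ e : End Y, IsIso (e : Y ⟶ Y) ∨ IsNilpotent e)
    {e : Z ⟶ Z} (he : e ≫ e = e) : e = 0 ∨ e = 𝟙 Z := by
  obtain ⟨φ, hφ⟩ := Triangle.coyoneda_exact₂ _ (rot_of_distTriang _ hdist) (v ≫ e)
    (comp_idem_comp_eq_zero hdist hu hend he)
  exact idem_eq_zero_or_eq_id_of_lift hdist hu hend he hφ.symm

end Triangle

theorem cone_of_irreducible_indecomposable
    {T : Type*} [Category T] [Preadditive T] [HasZeroObject T]
    [HasShift T ℤ] [∀ n : ℤ, (shiftFunctor T n).Additive] [Pretriangulated T]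
    [IsTriangulated T]
    {X Y Z : T} (u : X ⟶ Y) (v : Y ⟶ Z) (w : Z ⟶ X⟦(1 : ℤ)⟧)
    (hdist : Triangle.mk u v w ∈ distTriang T)
    (hX : Indecomposable X) (hY : Indecomposable Y)
    (hu : IrreducibleHom u)
    (hend : ∀ e : CategoryTheory.End Y, IsIso (e : Y ⟶ Y) ∨ IsNilpotent e) :
    (∀ e : Z ⟶ Z, e ≫ e = e → e = 0 ∨ e = 𝟙 Z) ∧ Indecomposable Z := by
  have hidem (e : Z ⟶ Z) (he : e ≫ e = e) : e = 0 ∨ e = 𝟙 Z :=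
    idem_eq_zero_or_eq_id hdist hu hend he
  refine ⟨hidem, indecomposable_of_idempotents (fun hZ => ?_) hidem⟩
  exact mor₂_ne_zero_of_not_isSplitEpi hdist hu.2.1 (hZ.eq_of_tgt _ _)

end ARShapes
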